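/- arXiv:2206.00270 — 2 statements merged into one kernel-verified Lean document; each statement's English description precedes it below -/
import Mathlib

section
/- Let A and B be positive definite d×d matrices with A - B positive semidefinite. Then for every nonzero vector x, (xᵀAx)/(xᵀBx) ≤ det(A)/det(B) and likewise (xᵀB⁻¹x)/(xᵀA⁻¹x) ≤ det(A)/det(B). -/
/-!
Conjugating by `B^{-1/2}` turns `B ≤ A` into `1 ≤ M` with `M = B^{-1/2} A B^{-1/2}`. All
eigenvalues of `M` are then at least `1`, so each of them is at most their product
`det M = det A / det B`; hence `M ≤ (det A / det B) • 1`, i.e. `A ≤ (det A / det B) • B`, which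
bounds the first quotient. For the second, `B ≤ A` gives `A⁻¹ ≤ B⁻¹` (a Schur complement
argument on the block matrix `[A, 1; 1, B⁻¹]`), and the first bound applied to this pair has the
same determinant ratio.
-/

open Matrix
open scoped MatrixOrder ComplexOrder

namespace Matrix

variable {n : Type*} [Fintype n] [DecidableEq n]

theorem IsHermitian.one_le_eigenvalues {𝕜 : Type*} [RCLike 𝕜] {M : Matrix n n 𝕜}
    (hM : M.IsHermitian) (h : 1 ≤ M) (i : n) : 1 ≤ hM.eigenvalues i :=
  (CFC.one_le_iff M hM.isSelfAdjoint).mp h _ (hM.eigenvalues_mem_spectrum_real i)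

theorem IsHermitian.le_det_smul_one {M : Matrix n n ℝ} (hM : M.IsHermitian) (h : 1 ≤ M) :
    M ≤ M.det • 1 := by
  rw [← Algebra.algebraMap_eq_smul_one, le_algebraMap_iff_spectrum_le hM.isSelfAdjoint,
    hM.spectrum_real_eq_range_eigenvalues, Set.forall_mem_range, hM.det_eq_prod_eigenvalues]
  exact fun i ↦ Multiset.mem_le_prod_of_one_le (hM.one_le_eigenvalues h) (Finset.mem_univ i)

theorem PosDef.le_det_div_det_smul {A B : Matrix n n ℝ} (hB : B.PosDef) (h : B ≤ A) :
    A ≤ (A.det / B.det) • B := by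
  set S := CFC.sqrt B
  have hSS : S * S = B := CFC.sqrt_mul_sqrt_self B hB.posSemidef.nonneg
  have hS : S.IsHermitian := (CFC.sqrt_nonneg B).posSemidef.isHermitian
  have hdetS : S.det * S.det = B.det := by rw [← det_mul, hSS]
  have hSu : IsUnit S.det := isUnit_iff_ne_zero.mpr fun h0 ↦
    hB.det_pos.ne' (by rw [← hdetS, h0, zero_mul])
  set T := S⁻¹
  have hTS : T * S = 1 := nonsing_inv_mul S hSu
  have hST : S * T = 1 := mul_nonsing_inv S hSu
  set M := T * A * T
  have hSMS : S * M * S = A := by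
    simp only [M, ← mul_assoc, hST, one_mul]
    rw [mul_assoc, hTS, mul_one]
  have hTBT : T * B * T = 1 := by rw [← hSS, ← mul_assoc, hTS, one_mul, hST]
  have hT : star T = T := hS.inv
  have hM1 : 1 ≤ M := by
    simpa [hT, hTBT] using star_left_conjugate_le_conjugate h T
  have hM : M.IsHermitian := by simpa using (le_iff.mp hM1).isHermitian.add isHermitian_one
  have hdetM : M.det = A.det / B.det := by
    rw [det_mul, det_mul, det_nonsing_inv, Ring.inverse_eq_inv', ← hdetS]
    field_simp
  have := star_left_conjugate_le_conjugate (hM.le_det_smul_one hM1) S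
  rwa [hS.star_eq, hSMS, Matrix.mul_smul, mul_one, Matrix.smul_mul, hSS, hdetM] at this

theorem PosDef.inv_le_inv {𝕜 : Type*} [RCLike 𝕜] {A B : Matrix n n 𝕜} (hB : B.PosDef)
    (h : B ≤ A) : A⁻¹ ≤ B⁻¹ := by
  have hA : A.PosDef := by simpa using hB.add_posSemidef h
  have := hA.isUnit.invertible
  have := hB.isUnit.invertible
  have := hB.inv.isUnit.invertible
  rw [le_iff] at h ⊢
  have hblock : (fromBlocks A 1 1ᴴ B⁻¹).PosSemidef :=
    (PosDef.fromBlocks₂₂ A 1 hB.inv).mpr (by simpa using h)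
  simpa using (PosDef.fromBlocks₁₁ 1 B⁻¹ hA).mp hblock

omit [DecidableEq n] in
theorem PosDef.dotProduct_mulVec_div_le_of_le_smul {A B : Matrix n n ℝ} {c : ℝ} (hB : B.PosDef)
    (h : A ≤ c • B) {x : n → ℝ} (hx : x ≠ 0) :
    (x ⬝ᵥ A *ᵥ x) / (x ⬝ᵥ B *ᵥ x) ≤ c := by
  have hBx : 0 < x ⬝ᵥ B *ᵥ x := by simpa using hB.dotProduct_mulVec_pos hx
  have hquad := (le_iff.mp h).dotProduct_mulVec_nonneg x
  rw [sub_mulVec, dotProduct_sub, smul_mulVec, dotProduct_smul, star_trivial, smul_eq_mul]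
    at hquad
  rw [div_le_iff₀ hBx]
  linarith

end Matrix

theorem stmt_1 {d : ℕ} (A B : Matrix (Fin d) (Fin d) ℝ)
    (hA : A.PosDef) (hB : B.PosDef) (hAB : (A - B).PosSemidef)
    (x : Fin d → ℝ) (hx : x ≠ 0) :
    (x ⬝ᵥ A.mulVec x) / (x ⬝ᵥ B.mulVec x) ≤ A.det / B.det ∧
    (x ⬝ᵥ B⁻¹.mulVec x) / (x ⬝ᵥ A⁻¹.mulVec x) ≤ A.det / B.det := by
  have hBA : B ≤ A := hAB
  have hdet : B⁻¹.det / A⁻¹.det = A.det / B.det := by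
    rw [det_nonsing_inv, det_nonsing_inv, Ring.inverse_eq_inv', inv_div_inv]
  refine ⟨hB.dotProduct_mulVec_div_le_of_le_smul (hB.le_det_div_det_smul hBA) hx, ?_⟩
  rw [← hdet]
  exact hA.inv.dotProduct_mulVec_div_le_of_le_smul
    (hA.inv.le_det_div_det_smul (hB.inv_le_inv hBA)) hx
end

section
/- Let λ > 0 and let y_1, …, y_n ∈ R^d with ‖y_t‖ ≤ 1 for all t. Define V_1 = λI and V_{t+1} = V_t + y_t y_tᵀ. Then ∑_{t=1}^n min(‖y_t‖²_{V_t^{-1}}, 1) ≤ 2 log(det(V_{n+1})/det(V_1)), where ‖y‖²_M = yᵀ M y. -/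
/-!
By the matrix determinant lemma, `det V_{t+1} = det V_t * (1 + q_t)` with
`q_t = ‖y_t‖²_{V_t⁻¹} ≥ 0`, so `log (det V_{n+1} / det V_1)` telescopes to `∑ log (1 + q_t)`.
The bound then holds term by term, since `min q 1 ≤ 2 log (1 + q)` for every `q ≥ 0`.
-/

open Matrix Finset

theorem Fin.sum_univ_succ_sub_castSucc {M : Type*} [AddCommGroup M] {n : ℕ}
    (f : Fin (n + 1) → M) :
    ∑ i : Fin n, (f i.succ - f i.castSucc) = f (Fin.last n) - f 0 := by
  rw [Finset.sum_sub_distrib, sub_eq_sub_iff_add_eq_add, add_comm, ← Fin.sum_univ_succ,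
    Fin.sum_univ_castSucc, add_comm]

theorem Real.min_le_two_mul_log_one_add {x : ℝ} (hx : 0 ≤ x) :
    min x 1 ≤ 2 * Real.log (1 + x) := by
  have h4x : min x 1 ≤ 4 * x / (x + 2) := by
    rw [le_div_iff₀ (by linarith)]
    rcases le_total x 1 with h | h
    · rw [min_eq_left h]; nlinarith
    · rw [min_eq_right h]; linarith
  calc min x 1 ≤ 4 * x / (x + 2) := h4x
    _ = 2 * (2 * x / (x + 2)) := by ring
    _ ≤ 2 * Real.log (1 + x) := by gcongr; exact Real.le_log_one_add_of_nonneg hx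

namespace Matrix

variable {m : Type*} [Fintype m]

theorem PosDef.add_vecMulVec_self {A : Matrix m m ℝ} (hA : A.PosDef) (y : m → ℝ) :
    (A + vecMulVec y y).PosDef :=
  hA.add_posSemidef (posSemidef_vecMulVec_self_star y)

variable [DecidableEq m]

theorem det_add_vecMulVec {α : Type*} [CommRing α] {A : Matrix m m α} (hA : IsUnit A.det)
    (u v : m → α) :
    (A + vecMulVec u v).det = A.det * (1 + v ⬝ᵥ A⁻¹ *ᵥ u) := by
  rw [vecMulVec_eq Unit, det_add_replicateCol_mul_replicateRow hA, Matrix.mul_assoc,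
    ← replicateCol_mulVec, det_one_add_mul_comm,
    det_one_add_replicateCol_mul_replicateRow]

theorem PosSemidef.dotProduct_inv_mulVec_self_nonneg {A : Matrix m m ℝ} (hA : A.PosSemidef)
    (y : m → ℝ) : 0 ≤ y ⬝ᵥ A⁻¹ *ᵥ y :=
  hA.inv.dotProduct_mulVec_nonneg y

theorem PosDef.log_det_add_vecMulVec_self {A : Matrix m m ℝ} (hA : A.PosDef) (y : m → ℝ) :
    Real.log (A + vecMulVec y y).det = Real.log A.det + Real.log (1 + y ⬝ᵥ A⁻¹ *ᵥ y) := by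
  have hq := hA.posSemidef.dotProduct_inv_mulVec_self_nonneg y
  rw [det_add_vecMulVec hA.det_pos.ne'.isUnit, Real.log_mul hA.det_pos.ne' (by positivity)]

end Matrix

theorem stmt_2_general {d n : ℕ} (lam : ℝ) (hlam : 0 < lam)
    (y : Fin n → (Fin d → ℝ))
    (V : Fin (n + 1) → Matrix (Fin d) (Fin d) ℝ)
    (hV0 : V 0 = lam • (1 : Matrix (Fin d) (Fin d) ℝ))
    (hVs : ∀ t : Fin n, V t.succ = V t.castSucc + vecMulVec (y t) (y t)) :
    ∑ t : Fin n, min (y t ⬝ᵥ (V t.castSucc)⁻¹.mulVec (y t)) 1 ≤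
      2 * Real.log ((V (Fin.last n)).det / (V 0).det) := by
  have hpd : ∀ t, (V t).PosDef := by
    refine Fin.induction ?_ fun t ht ↦ ?_
    · rw [hV0]; exact PosDef.one.smul hlam
    · rw [hVs t]; exact ht.add_vecMulVec_self (y t)
  have hlog : Real.log ((V (Fin.last n)).det / (V 0).det) =
      ∑ t : Fin n, Real.log (1 + y t ⬝ᵥ (V t.castSucc)⁻¹ *ᵥ y t) := by
    rw [Real.log_div (hpd _).det_pos.ne' (hpd 0).det_pos.ne',
      ← Fin.sum_univ_succ_sub_castSucc fun t ↦ Real.log (V t).det]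
    refine Finset.sum_congr rfl fun t _ ↦ ?_
    rw [hVs t, (hpd t.castSucc).log_det_add_vecMulVec_self, add_sub_cancel_left]
  rw [hlog, Finset.mul_sum]
  exact Finset.sum_le_sum fun t _ ↦ Real.min_le_two_mul_log_one_add
    ((hpd t.castSucc).posSemidef.dotProduct_inv_mulVec_self_nonneg (y t))

theorem stmt_2 {d n : ℕ} (lam : ℝ) (hlam : 0 < lam)
    (y : Fin n → (Fin d → ℝ)) (hy : ∀ t, Real.sqrt (y t ⬝ᵥ y t) ≤ 1)
    (V : Fin (n + 1) → Matrix (Fin d) (Fin d) ℝ)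
    (hV0 : V 0 = lam • (1 : Matrix (Fin d) (Fin d) ℝ))
    (hVs : ∀ t : Fin n, V t.succ = V t.castSucc + vecMulVec (y t) (y t)) :
    ∑ t : Fin n, min (y t ⬝ᵥ (V t.castSucc)⁻¹.mulVec (y t)) 1 ≤
      2 * Real.log ((V (Fin.last n)).det / (V 0).det) :=
  stmt_2_general lam hlam y V hV0 hVs
end
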